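/- Let d ≥ 2, ε ∈ (0,1), let S = {γ₁, …, γ_{2r}} ⊂ SL_d(ℝ) be an ε-Schottky symmetric set of pairwise distinct proximal matrices, and let D denote the diameter of the metric space (ℙ(ℝ^d), dist). Then for every reduced word x₀, x₁, …, x_n in S, the subset (x₀ x₁ ⋯ x_{n−1})(b(x_n⁺, ε)) of ℙ(ℝ^d) has diameter at most εⁿ · D. -/

import Mathlib

open Polynomial Filter
open scoped Classical

noncomputable section

namespace Amalgam

variable {W : Type*} [NormedAddCommGroup W] [NormedSpace ℝ W]

/-- The distance between two subspaces of a normed space: the infimum of `‖x - y‖` over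
unit vectors `x ∈ X`, `y ∈ Y`.  For one-dimensional subspaces this is the metric on
projective space; for a line and a hyperplane it is the distance from the point of
projective space to the subset of projective space determined by the hyperplane. -/
def sdist (X Y : Submodule ℝ W) : ℝ :=
  sInf {r : ℝ | ∃ x ∈ X, ∃ y ∈ Y, ‖x‖ = 1 ∧ ‖y‖ = 1 ∧ r = ‖x - y‖}

/-- A point of projective space, i.e. a line through the origin. -/
def IsLine (X : Submodule ℝ W) : Prop := Module.finrank ℝ X = 1

/-- The diameter of the projective space of `W`. -/
def projDiam (W : Type*) [NormedAddCommGroup W] [NormedSpace ℝ W] : ℝ :=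
  sSup {t : ℝ | ∃ X Y : Submodule ℝ W, IsLine X ∧ IsLine Y ∧ t = sdist X Y}

variable [FiniteDimensional ℝ W]

/-- `f` is proximal: its characteristic polynomial has a unique complex root of maximal
modulus, and this root is real with multiplicity one. -/
def IsProximal (f : W →ₗ[ℝ] W) : Prop :=
  ∃ lam : ℝ,
    (Polynomial.map (algebraMap ℝ ℂ) (LinearMap.charpoly f)).roots.count (lam : ℂ) = 1 ∧
    ∀ μ ∈ (Polynomial.map (algebraMap ℝ ℂ) (LinearMap.charpoly f)).roots,
      μ ≠ (lam : ℂ) → ‖μ‖ < |lam|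

/-- The top eigenvalue of a proximal transformation (junk value `0` otherwise). -/
def topEig (f : W →ₗ[ℝ] W) : ℝ :=
  if h : IsProximal f then h.choose else 0

/-- The attracting eigenline `γ⁺` of a proximal transformation: the eigenspace of the
eigenvalue of maximal modulus. -/
def attLine (f : W →ₗ[ℝ] W) : Submodule ℝ W :=
  LinearMap.ker (f - topEig f • LinearMap.id)

/-- The repelling hyperplane `γ⁻` of a proximal transformation: the unique invariant
complement of the attracting line. -/
def repHyp (f : W →ₗ[ℝ] W) : Submodule ℝ W :=
  if h : ∃ H : Submodule ℝ W, Submodule.map f H ≤ H ∧ IsCompl (attLine f) H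
  then h.choose else ⊥

/-- `f` is `ε`-proximal: it is proximal, `dist(γ⁺, γ⁻) ≥ 2ε`, the induced action on
projective space is `ε`-Lipschitz on `B(γ⁻, ε)`, and maps `B(γ⁻, ε)` into `b(γ⁺, ε)`. -/
def IsEpsProximal (ε : ℝ) (f : W →ₗ[ℝ] W) : Prop :=
  IsProximal f ∧
  2 * ε ≤ sdist (attLine f) (repHyp f) ∧
  (∀ X Y : Submodule ℝ W, IsLine X → IsLine Y →
      ε ≤ sdist X (repHyp f) → ε ≤ sdist Y (repHyp f) →
      sdist (X.map f) (Y.map f) ≤ ε * sdist X Y) ∧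
  (∀ X : Submodule ℝ W, IsLine X → ε ≤ sdist X (repHyp f) →
      ε ≥ sdist (X.map f) (attLine f))

/-- An indexed family `f` (with `g i` playing the role of `(f i)⁻¹`) is `ε`-Schottky:
each member is `ε`-proximal and `dist((fᵢ)⁺, (fⱼ⁻¹)⁻) ≥ 6ε` for `i ≠ j`. -/
def IsSchottkyFam {ι : Type*} (ε : ℝ) (f g : ι → (W →ₗ[ℝ] W)) : Prop :=
  (∀ i, IsEpsProximal ε (f i)) ∧
  ∀ i j, i ≠ j → 6 * ε ≤ sdist (attLine (f i)) (repHyp (g j))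


abbrev E (d : ℕ) := EuclideanSpace ℝ (Fin d)
abbrev SL (d : ℕ) := Matrix.SpecialLinearGroup (Fin d) ℝ
abbrev Dual' (d : ℕ) := StrongDual ℝ (E d)

/-- The linear endomorphism of Euclidean space determined by a matrix in `SL_d(ℝ)`. -/
def toEnd {d : ℕ} (g : SL d) : E d →ₗ[ℝ] E d :=
  Matrix.toEuclideanLin (g : Matrix (Fin d) (Fin d) ℝ)

/-- The same map as a continuous linear map. -/
def toCLM {d : ℕ} (g : SL d) : E d →L[ℝ] E d :=
  LinearMap.toContinuousLinearMap (toEnd g)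

/-- The dual transformation `γ* : θ ↦ θ ∘ γ⁻¹` acting on the dual space `(ℝ^d)*`
(equipped with the dual norm). -/
def dualEnd {d : ℕ} (g : SL d) : Dual' d →ₗ[ℝ] Dual' d where
  toFun θ := θ.comp (toCLM g⁻¹)
  map_add' θ₁ θ₂ := by ext v; simp
  map_smul' c θ := by ext v; simp

/-- The kernel of a set of functionals: `{v : φ(v) = 0 for all φ ∈ Y}`. -/
def dualKer {d : ℕ} (Y : Submodule ℝ (Dual' d)) : Submodule ℝ (E d) where
  carrier := {v | ∀ φ ∈ Y, φ v = 0}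
  add_mem' := by
    intro a b ha hb φ hφ
    simp [map_add, ha φ hφ, hb φ hφ]
  zero_mem' := by intro φ hφ; simp
  smul_mem' := by
    intro c a ha φ hφ
    simp [ha φ hφ]

/-- The annihilator of a subspace inside the dual space. -/
def annih {d : ℕ} (U : Submodule ℝ (E d)) : Submodule ℝ (Dual' d) where
  carrier := {φ | ∀ v ∈ U, φ v = 0}
  add_mem' := by
    intro a b ha hb v hv
    simp [ha v hv, hb v hv]
  zero_mem' := by intro v hv; simp
  smul_mem' := by
    intro c a ha v hv
    simp [ha v hv]

/-- The operator norm of `g ∈ SL_d(ℝ)` (with respect to the Euclidean norm). -/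
def opN {d : ℕ} (g : SL d) : ℝ := ‖toCLM g‖

/-- The second compound matrix of a `d × d` matrix: the matrix of `2 × 2` minors,
indexed by increasingly ordered pairs. -/
def compound2 {d : ℕ} (g : Matrix (Fin d) (Fin d) ℝ) :
    Matrix {p : Fin d × Fin d // p.1 < p.2} {p : Fin d × Fin d // p.1 < p.2} ℝ :=
  fun p q => g p.1.1 q.1.1 * g p.1.2 q.1.2 - g p.1.1 q.1.2 * g p.1.2 q.1.1

/-- The operator norm of the second compound matrix (Euclidean norms). -/
def c2norm {d : ℕ} (g : Matrix (Fin d) (Fin d) ℝ) : ℝ :=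
  ‖LinearMap.toContinuousLinearMap (Matrix.toEuclideanLin (compound2 g))‖


/-- A reduced word in the set `S`: a nonempty finite sequence of elements of `S` in which
no letter is followed by its inverse. -/
def IsReducedWord {d : ℕ} (S : Set (SL d)) (w : List (SL d)) : Prop :=
  w ≠ [] ∧ (∀ a ∈ w, a ∈ S) ∧ List.Chain' (fun a b => b ≠ a⁻¹) w

/-- An infinite reduced word in the set `S`. -/
def IsInfReducedWord {d : ℕ} (S : Set (SL d)) (x : ℕ → SL d) : Prop :=
  (∀ i, x i ∈ S) ∧ ∀ i, x (i + 1) ≠ (x i)⁻¹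

/-- The partial product `x₀ x₁ ⋯ x_n` of an infinite word. -/
def wordProd {d : ℕ} (x : ℕ → SL d) (n : ℕ) : SL d :=
  ((List.range (n + 1)).map x).prod

/-- A family of matrices is symmetric if it is closed under inverses. -/
def SymmFam {ι : Type*} {d : ℕ} (γ : ι → SL d) : Prop :=
  ∀ i, ∃ j, γ j = (γ i)⁻¹

/-- The family `γ` is `ε`-Schottky as acting on `ℙ(ℝ^d)`. -/
def PrimalSchottky {ι : Type*} {d : ℕ} (ε : ℝ) (γ : ι → SL d) : Prop :=
  IsSchottkyFam ε (fun i => toEnd (γ i)) (fun i => toEnd ((γ i)⁻¹))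

/-- The dual family `γ*` is `ε`-Schottky as acting on `ℙ((ℝ^d)*)`. -/
def DualSchottky {ι : Type*} {d : ℕ} (ε : ℝ) (γ : ι → SL d) : Prop :=
  IsSchottkyFam ε (fun i => dualEnd (γ i)) (fun i => dualEnd ((γ i)⁻¹))

/-- `g` is biproximal: both `g` and `g⁻¹` are proximal. -/
def IsBiproximal {d : ℕ} (g : SL d) : Prop :=
  IsProximal (toEnd g) ∧ IsProximal (toEnd g⁻¹)

/-- A symmetric family of pairwise distinct biproximal matrices is well-positioned if the
attracting lines are pairwise distinct and `γᵢ⁺ ⊄ γⱼ⁻` whenever `γⱼ ≠ γᵢ⁻¹`. -/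
def WellPositioned {ι : Type*} {d : ℕ} (γ : ι → SL d) : Prop :=
  (∀ i, IsBiproximal (γ i)) ∧
  (∀ i j, i ≠ j → attLine (toEnd (γ i)) ≠ attLine (toEnd (γ j))) ∧
  (∀ i j, γ j ≠ (γ i)⁻¹ → ¬ attLine (toEnd (γ i)) ≤ repHyp (toEnd (γ j)))

/-- The spectral radius: maximal modulus of the complex roots of the characteristic
polynomial. -/
def specRad {W : Type*} [NormedAddCommGroup W] [NormedSpace ℝ W] [FiniteDimensional ℝ W]
    (f : W →ₗ[ℝ] W) : ℝ :=
  sSup {t : ℝ | ∃ μ ∈ (Polynomial.map (algebraMap ℝ ℂ) (LinearMap.charpoly f)).roots,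
      t = ‖μ‖}

end Amalgam

/-! If `X ∈ b(x_n⁺, ε)`, the separation `dist(x_n⁺, x_{n-1}⁻) ≥ 6ε` and the triangle inequality
keep `X` at distance at least `ε` from the repelling hyperplane `x_{n-1}⁻`, so `x_{n-1}` maps `X`
into `b(x_{n-1}⁺, ε)` and is `ε`-Lipschitz there. Pushing the lines forward one letter at a time
therefore stays in the good regions and contracts by `ε` at each of the `n` steps, and the initial
distance is at most `D`. -/

namespace Amalgam

section Projective

variable {W : Type*} [NormedAddCommGroup W] [NormedSpace ℝ W]

lemma sdist_nonneg (X Y : Submodule ℝ W) : 0 ≤ sdist X Y :=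
  Real.sInf_nonneg (by rintro r ⟨x, _, y, _, _, _, rfl⟩; positivity)

lemma sdist_le_norm_sub {X Y : Submodule ℝ W} {x y : W} (hx : x ∈ X) (hy : y ∈ Y)
    (hx1 : ‖x‖ = 1) (hy1 : ‖y‖ = 1) : sdist X Y ≤ ‖x - y‖ :=
  csInf_le ⟨0, by rintro r ⟨x, _, y, _, _, _, rfl⟩; positivity⟩ ⟨x, hx, y, hy, hx1, hy1, rfl⟩

lemma sdist_eq_zero_of_not_exists_left {X Y : Submodule ℝ W} (hX : ¬∃ x ∈ X, ‖x‖ = 1) :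
    sdist X Y = 0 := by
  unfold sdist
  convert Real.sInf_empty using 2
  refine Set.eq_empty_of_forall_notMem ?_
  rintro r ⟨x, hx, -, -, hx1, -⟩
  exact hX ⟨x, hx, hx1⟩

lemma sdist_eq_zero_of_not_exists_right {X Y : Submodule ℝ W} (hY : ¬∃ y ∈ Y, ‖y‖ = 1) :
    sdist X Y = 0 := by
  unfold sdist
  convert Real.sInf_empty using 2
  refine Set.eq_empty_of_forall_notMem ?_
  rintro r ⟨-, -, y, hy, -, hy1, -⟩
  exact hY ⟨y, hy, hy1⟩

lemma IsLine.exists_norm_eq_one {X : Submodule ℝ W} (hX : IsLine X) : ∃ x ∈ X, ‖x‖ = 1 := by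
  obtain ⟨x, hx, hx0⟩ := Submodule.exists_mem_ne_zero_of_ne_bot (p := X) <| by
    rintro rfl
    simp [IsLine] at hX
  exact ⟨‖x‖⁻¹ • x, X.smul_mem _ hx, norm_smul_inv_norm hx0⟩

lemma IsLine.eq_or_eq_neg_of_norm_eq_one {X : Submodule ℝ W} (hX : IsLine X) {x y : W}
    (hx : x ∈ X) (hy : y ∈ X) (hx1 : ‖x‖ = 1) (hy1 : ‖y‖ = 1) : y = x ∨ y = -x := by
  have hx0 : (⟨x, hx⟩ : X) ≠ 0 := by
    rintro h
    simp_all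
  obtain ⟨c, hc⟩ := (finrank_eq_one_iff_of_nonzero' _ hx0).mp hX ⟨y, hy⟩
  have hcy : c • x = y := congrArg Subtype.val hc
  have hc1 : |c| = 1 := by
    simpa [← hcy, norm_smul, hx1] using hy1
  rcases abs_eq zero_le_one |>.mp hc1 with rfl | rfl
  · simp [← hcy]
  · simp [← hcy]

lemma IsLine.sdist_le_add {X A H : Submodule ℝ W} (hX : IsLine X) :
    sdist A H ≤ sdist X A + sdist X H := by
  by_cases hA : ∃ a ∈ A, ‖a‖ = 1
  swap
  · rw [sdist_eq_zero_of_not_exists_left hA]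
    exact add_nonneg (sdist_nonneg _ _) (sdist_nonneg _ _)
  by_cases hH : ∃ h ∈ H, ‖h‖ = 1
  swap
  · rw [sdist_eq_zero_of_not_exists_right hH]
    exact add_nonneg (sdist_nonneg _ _) (sdist_nonneg _ _)
  obtain ⟨x₀, hx₀, hx₀1⟩ := hX.exists_norm_eq_one
  obtain ⟨a₀, ha₀, ha₀1⟩ := hA
  obtain ⟨h₀, hh₀, hh₀1⟩ := hH
  -- `x' = ±x`, and replacing `a` by `-a` if needed puts `a` and `h` on a path through `x`
  have key : ∀ x ∈ X, ∀ x' ∈ X, ∀ a ∈ A, ∀ h ∈ H, ‖x‖ = 1 → ‖x'‖ = 1 → ‖a‖ = 1 → ‖h‖ = 1 →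
      sdist A H ≤ ‖x' - a‖ + ‖x - h‖ := by
    intro x hx x' hx' a ha h hh hx1 hx'1 ha1 hh1
    rcases hX.eq_or_eq_neg_of_norm_eq_one hx hx' hx1 hx'1 with rfl | rfl
    · calc sdist A H ≤ ‖a - h‖ := sdist_le_norm_sub ha hh ha1 hh1
        _ ≤ ‖x' - a‖ + ‖x' - h‖ := by
          rw [norm_sub_rev x' a]; exact norm_sub_le_norm_sub_add_norm_sub a x' h
    · calc sdist A H ≤ ‖-a - h‖ := sdist_le_norm_sub (A.neg_mem ha) hh (by rwa [norm_neg]) hh1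
        _ ≤ ‖-a - x‖ + ‖x - h‖ := norm_sub_le_norm_sub_add_norm_sub _ x h
        _ = ‖-x - a‖ + ‖x - h‖ := by rw [show -a - x = -x - a by abel]
  rw [← sub_le_iff_le_add']
  refine le_csInf ⟨_, x₀, hx₀, h₀, hh₀, hx₀1, hh₀1, rfl⟩ ?_
  rintro _ ⟨x, hx, h, hh, hx1, hh1, rfl⟩
  rw [sub_le_comm]
  refine le_csInf ⟨_, x₀, hx₀, a₀, ha₀, hx₀1, ha₀1, rfl⟩ ?_
  rintro _ ⟨x', hx', a, ha, hx'1, ha1, rfl⟩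
  linarith [key x hx x' hx' a ha h hh hx1 hx'1 ha1 hh1]

lemma IsLine.le_sdist_of_two_mul_le {X A H : Submodule ℝ W} {ε : ℝ} (hX : IsLine X)
    (hAH : 2 * ε ≤ sdist A H) (hXA : sdist X A ≤ ε) : ε ≤ sdist X H := by
  linarith [hX.sdist_le_add (A := A) (H := H)]

lemma IsLine.sdist_le_two {X Y : Submodule ℝ W} (hX : IsLine X) (hY : IsLine Y) :
    sdist X Y ≤ 2 := by
  obtain ⟨x, hx, hx1⟩ := hX.exists_norm_eq_one
  obtain ⟨y, hy, hy1⟩ := hY.exists_norm_eq_one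
  calc sdist X Y ≤ ‖x - y‖ := sdist_le_norm_sub hx hy hx1 hy1
    _ ≤ ‖x‖ + ‖y‖ := norm_sub_le x y
    _ = 2 := by rw [hx1, hy1]; norm_num

lemma IsLine.sdist_le_projDiam {X Y : Submodule ℝ W} (hX : IsLine X) (hY : IsLine Y) :
    sdist X Y ≤ projDiam W := by
  refine le_csSup ⟨2, ?_⟩ ⟨X, Y, hX, hY, rfl⟩
  rintro t ⟨X', Y', hX', hY', rfl⟩
  exact hX'.sdist_le_two hY'

end Projective

variable {d : ℕ}

lemma toEnd_mul (g h : SL d) : toEnd (g * h) = toEnd g ∘ₗ toEnd h := by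
  ext v
  simp [toEnd, Matrix.toEuclideanLin, Matrix.mulVec_mulVec]

lemma toEnd_one : toEnd (1 : SL d) = LinearMap.id := by
  ext v
  simp [toEnd, Matrix.toEuclideanLin]

lemma toEnd_injective (g : SL d) : Function.Injective (toEnd g) :=
  Function.LeftInverse.injective (g := toEnd g⁻¹) fun v => by
    rw [← LinearMap.comp_apply, ← toEnd_mul, inv_mul_cancel, toEnd_one, LinearMap.id_apply]

lemma IsLine.map_toEnd (g : SL d) {X : Submodule ℝ (E d)} (hX : IsLine X) :
    IsLine (X.map (toEnd g)) :=
  (LinearEquiv.finrank_eq (Submodule.equivMapOfInjective _ (toEnd_injective g) X)).symm.trans hX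

/-- `X ∈ b(g⁺, ε)`. -/
def MemAttBall (ε : ℝ) (g : SL d) (X : Submodule ℝ (E d)) : Prop :=
  IsLine X ∧ sdist X (attLine (toEnd g)) ≤ ε

lemma IsReducedWord.cons_cons {S : Set (SL d)} {a b : SL d} {w : List (SL d)}
    (hw : IsReducedWord S (a :: b :: w)) :
    a ∈ S ∧ b ∈ S ∧ b ≠ a⁻¹ ∧ IsReducedWord S (b :: w) :=
  ⟨hw.2.1 a (by simp), hw.2.1 b (by simp), (List.isChain_cons_cons.mp hw.2.2).1,
    List.cons_ne_nil b w, fun c hc => hw.2.1 c (List.mem_cons_of_mem a hc), hw.2.2.tail⟩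

namespace PrimalSchottky

variable {ι : Type*} {ε : ℝ} {γ : ι → SL d}

lemma isEpsProximal (hS : PrimalSchottky ε γ) {a : SL d} (ha : a ∈ Set.range γ) :
    IsEpsProximal ε (toEnd a) := by
  obtain ⟨i, rfl⟩ := ha
  exact hS.1 i

lemma six_mul_le_sdist (hS : PrimalSchottky ε γ) (hsym : SymmFam γ) {a b : SL d}
    (ha : a ∈ Set.range γ) (hb : b ∈ Set.range γ) (hba : b ≠ a⁻¹) :
    6 * ε ≤ sdist (attLine (toEnd b)) (repHyp (toEnd a)) := by
  obtain ⟨i, rfl⟩ := ha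
  obtain ⟨j, rfl⟩ := hb
  obtain ⟨k, hk⟩ := hsym i
  have : 6 * ε ≤ sdist (attLine (toEnd (γ j))) (repHyp (toEnd (γ k)⁻¹)) :=
    hS.2 j k (by rintro rfl; exact hba hk)
  rwa [hk, inv_inv] at this

lemma le_sdist_repHyp (hS : PrimalSchottky ε γ) (hsym : SymmFam γ) (hε : 0 ≤ ε) {a b : SL d}
    (ha : a ∈ Set.range γ) (hb : b ∈ Set.range γ) (hba : b ≠ a⁻¹)
    {X : Submodule ℝ (E d)} (hX : MemAttBall ε b X) : ε ≤ sdist X (repHyp (toEnd a)) :=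
  hX.1.le_sdist_of_two_mul_le (by linarith [hS.six_mul_le_sdist hsym ha hb hba]) hX.2

lemma memAttBall_map (hS : PrimalSchottky ε γ) (hsym : SymmFam γ) (hε : 0 ≤ ε) {a b : SL d}
    (ha : a ∈ Set.range γ) (hb : b ∈ Set.range γ) (hba : b ≠ a⁻¹)
    {X : Submodule ℝ (E d)} (hX : MemAttBall ε b X) : MemAttBall ε a (X.map (toEnd a)) :=
  ⟨hX.1.map_toEnd a,
    (hS.isEpsProximal ha).2.2.2 X hX.1 (hS.le_sdist_repHyp hsym hε ha hb hba hX)⟩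

lemma sdist_map_le (hS : PrimalSchottky ε γ) (hsym : SymmFam γ) (hε : 0 ≤ ε) {a b : SL d}
    (ha : a ∈ Set.range γ) (hb : b ∈ Set.range γ) (hba : b ≠ a⁻¹)
    {X Y : Submodule ℝ (E d)} (hX : MemAttBall ε b X) (hY : MemAttBall ε b Y) :
    sdist (X.map (toEnd a)) (Y.map (toEnd a)) ≤ ε * sdist X Y :=
  (hS.isEpsProximal ha).2.2.1 X Y hX.1 hY.1 (hS.le_sdist_repHyp hsym hε ha hb hba hX)
    (hS.le_sdist_repHyp hsym hε ha hb hba hY)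

lemma memAttBall_map_prod_take (hS : PrimalSchottky ε γ) (hsym : SymmFam γ) (hε : 0 ≤ ε) :
    ∀ (n : ℕ) (w : List (SL d)) (hlen : w.length = n + 1), IsReducedWord (Set.range γ) w →
      ∀ {X : Submodule ℝ (E d)}, MemAttBall ε (w.get ⟨n, by omega⟩) X →
        MemAttBall ε (w.get ⟨0, by omega⟩) (X.map (toEnd (w.take n).prod))
  | 0, [_], _, _, _, hX => by simpa [toEnd_one] using hX
  | n + 1, a :: b :: w, hlen, hw, X, hX => by
    obtain ⟨ha, hb, hba, hw'⟩ := hw.cons_cons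
    have hbX := memAttBall_map_prod_take hS hsym hε n (b :: w) (by simpa using hlen) hw' hX
    rw [List.take_succ_cons, List.prod_cons, toEnd_mul, Submodule.map_comp]
    exact hS.memAttBall_map hsym hε ha hb hba hbX
  | 0, _ :: _ :: _, hlen, _, _, _ | _ + 1, [_], hlen, _, _, _ => by simp at hlen

lemma sdist_map_prod_take_le (hS : PrimalSchottky ε γ) (hsym : SymmFam γ) (hε : 0 ≤ ε) :
    ∀ (n : ℕ) (w : List (SL d)) (hlen : w.length = n + 1), IsReducedWord (Set.range γ) w →
      ∀ {X Y : Submodule ℝ (E d)}, MemAttBall ε (w.get ⟨n, by omega⟩) X →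
        MemAttBall ε (w.get ⟨n, by omega⟩) Y →
        sdist (X.map (toEnd (w.take n).prod)) (Y.map (toEnd (w.take n).prod)) ≤
          ε ^ n * sdist X Y
  | 0, [_], _, _, _, _, _, _ => by simp [toEnd_one]
  | n + 1, a :: b :: w, hlen, hw, X, Y, hX, hY => by
    obtain ⟨ha, hb, hba, hw'⟩ := hw.cons_cons
    have hlen' : (b :: w).length = n + 1 := by simpa using hlen
    rw [List.take_succ_cons, List.prod_cons, toEnd_mul, Submodule.map_comp, Submodule.map_comp]
    calc _ ≤ ε * sdist (X.map (toEnd ((b :: w).take n).prod))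
          (Y.map (toEnd ((b :: w).take n).prod)) :=
          hS.sdist_map_le hsym hε ha hb hba
            (hS.memAttBall_map_prod_take hsym hε n (b :: w) hlen' hw' hX)
            (hS.memAttBall_map_prod_take hsym hε n (b :: w) hlen' hw' hY)
      _ ≤ ε * (ε ^ n * sdist X Y) := by
          gcongr; exact sdist_map_prod_take_le hS hsym hε n (b :: w) hlen' hw' hX hY
      _ = ε ^ (n + 1) * sdist X Y := by ring
  | 0, _ :: _ :: _, hlen, _, _, _, _, _ | _ + 1, [_], hlen, _, _, _, _, _ => by simp at hlen

end PrimalSchottky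

/-- contraction of the attracting neighborhoods under reduced words. -/
theorem statement6 (d r : ℕ) (ε : ℝ) (hε : ε ∈ Set.Ioo (0 : ℝ) 1)
    (γ : Fin (2 * r) → SL d) (hsym : SymmFam γ)
    (hS : PrimalSchottky ε γ)
    (w : List (SL d)) (n : ℕ) (hlen : w.length = n + 1)
    (hw : IsReducedWord (Set.range γ) w)
    (X Y : Submodule ℝ (E d)) (hX : IsLine X) (hY : IsLine Y)
    (hXb : sdist X (attLine (toEnd (w.get ⟨n, by omega⟩))) ≤ ε)
    (hYb : sdist Y (attLine (toEnd (w.get ⟨n, by omega⟩))) ≤ ε) :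
    sdist (Submodule.map (toEnd ((w.take n).prod)) X)
      (Submodule.map (toEnd ((w.take n).prod)) Y) ≤ ε ^ n * projDiam (E d) :=
  calc _ ≤ ε ^ n * sdist X Y :=
        hS.sdist_map_prod_take_le hsym hε.1.le n w hlen hw ⟨hX, hXb⟩ ⟨hY, hYb⟩
    _ ≤ ε ^ n * projDiam (E d) :=
      mul_le_mul_of_nonneg_left (hX.sdist_le_projDiam hY) (pow_nonneg hε.1.le n)

end Amalgam
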